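/- Every ordered-group automorphism of P₁ := ℚ × ℤ (lexicographic order, coordinatewise addition) fixing the element (0,1) has the form (q,z) ↦ (rq, z) for some positive rational r. Consequently, the orbits of the automorphism group fixing (0,1) are exactly the sets {(q,z) : q > 0}, {(q,z) : q < 0}, and {(0,z)} for each z ∈ ℤ. -/
import Mathlib


/-- The lexicographic strict order on `ℚ × ℤ`. -/
def LexLt (a b : ℚ × ℤ) : Prop :=
  a.1 < b.1 ∨ (a.1 = b.1 ∧ a.2 < b.2)

/-- An ordered-group automorphism of `P₁ = ℚ × ℤ` fixing `(0,1)`. -/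
def P1Aut (f : ℚ × ℤ → ℚ × ℤ) : Prop :=
  Function.Bijective f ∧
  (∀ a b : ℚ × ℤ, f (a + b) = f a + f b) ∧
  (∀ a b : ℚ × ℤ, LexLt a b ↔ LexLt (f a) (f b)) ∧
  f ((0 : ℚ), (1 : ℤ)) = ((0 : ℚ), (1 : ℤ))

lemma scale_aut (r : ℚ) (hr : 0 < r) : P1Aut (fun p : ℚ × ℤ => (r * p.1, p.2)) := by
  refine ⟨?_, ?_, ?_, by simp⟩
  · rw [Function.bijective_iff_has_inverse]
    refine ⟨fun p => (r⁻¹ * p.1, p.2), fun p => ?_, fun p => ?_⟩ <;>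
      simp [← mul_assoc, inv_mul_cancel₀ hr.ne', mul_inv_cancel₀ hr.ne']
  · intro a b; simp [Prod.ext_iff, mul_add]
  · intro a b
    unfold LexLt
    simp only
    constructor
    · rintro (h | ⟨h1, h2⟩)
      · exact Or.inl ((mul_lt_mul_iff_right₀ hr).mpr h)
      · exact Or.inr ⟨by rw [h1], h2⟩
    · rintro (h | ⟨h1, h2⟩)
      · exact Or.inl ((mul_lt_mul_iff_right₀ hr).mp h)
      · exact Or.inr ⟨mul_left_cancel₀ hr.ne' h1, h2⟩

lemma aut_form (f : ℚ × ℤ → ℚ × ℤ) (hf : P1Aut f) :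
    ∃ r : ℚ, 0 < r ∧ ∀ (q : ℚ) (z : ℤ), f (q, z) = (r * q, z) := by
  obtain ⟨hbij, hadd, hord, hfix⟩ := hf
  set F : ℚ × ℤ →+ ℚ × ℤ := AddMonoidHom.mk' f hadd with hF
  have hFf : ∀ p, F p = f p := fun p => rfl
  -- f (0, z) = (0, z)
  have h0z : ∀ z : ℤ, f ((0 : ℚ), z) = ((0 : ℚ), z) := by
    intro z
    have h1 : ((0 : ℚ), z) = z • ((0 : ℚ), (1 : ℤ)) := by
      simp [Prod.ext_iff]
    rw [← hFf, h1, map_zsmul, hFf, hfix]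
  -- second component of f (q, 0) is 0
  have hsnd : ∀ q : ℚ, (f (q, (0 : ℤ))).2 = 0 := by
    intro q
    set m : ℤ := (f (q, (0 : ℤ))).2 with hm
    by_contra hne
    set n : ℕ := m.natAbs + 1 with hn
    have hdvd : (n : ℤ) ∣ m := by
      have h1 : (q, (0 : ℤ)) = n • ((q / n, (0 : ℤ)) : ℚ × ℤ) := by
        have hn0 : (n : ℚ) ≠ 0 := by positivity
        refine Prod.ext ?_ ?_
        · show q = n • (q / n)
          rw [nsmul_eq_mul, mul_div_cancel₀ _ hn0]
        · show (0 : ℤ) = n • (0 : ℤ)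
          simp
      have h2 : f (q, (0:ℤ)) = n • f (q / n, (0:ℤ)) := by
        rw [← hFf, h1, map_nsmul, hFf]
      rw [hm, h2]
      exact ⟨(f (q / n, (0:ℤ))).2, by simp [mul_comm]⟩
    have habs : (n : ℤ) ≤ |m| := by
      exact Int.le_of_dvd (abs_pos.mpr hne) ((dvd_abs _ _).mpr hdvd)
    have : |m| < (n : ℤ) := by
      rw [hn, Int.abs_eq_natAbs]
      exact_mod_cast Nat.lt_succ_self _
    omega
  -- first component is linear
  set g : ℚ →+ ℚ := {
    toFun := fun q => (f (q, (0 : ℤ))).1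
    map_zero' := by
      have h : f ((0:ℚ), (0:ℤ)) = ((0:ℚ), (0:ℤ)) := map_zero F
      show (f ((0:ℚ), (0:ℤ))).1 = 0
      rw [h]
    map_add' := by
      intro a b
      have : ((a + b : ℚ), (0 : ℤ)) = (a, (0:ℤ)) + (b, (0:ℤ)) := by simp
      simp only [this, hadd]; rfl } with hg
  have hglin : ∀ q : ℚ, g q = g 1 * q := by
    intro q
    have : g q = g (q • (1 : ℚ)) := by norm_num
    rw [this, map_rat_smul g q 1, smul_eq_mul, mul_comm]
  have hform : ∀ (q : ℚ) (z : ℤ), f (q, z) = (g 1 * q, z) := by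
    intro q z
    have hsplit : ((q : ℚ), z) = (q, (0:ℤ)) + ((0:ℚ), z) := by simp
    rw [hsplit, hadd, h0z]
    have : f (q, (0:ℤ)) = (g 1 * q, 0) := by
      have h1 := hglin q
      have h2 := hsnd q
      have : f (q, (0:ℤ)) = ((f (q, (0:ℤ))).1, (f (q, (0:ℤ))).2) := rfl
      rw [this, h2, ← h1]; rfl
    rw [this]; simp
  refine ⟨g 1, ?_, hform⟩
  -- positivity
  have hlt : LexLt ((0:ℚ), (0:ℤ)) ((1:ℚ), (0:ℤ)) := Or.inl (by norm_num)
  have := (hord _ _).mp hlt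
  rw [hform 0 0, hform 1 0] at this
  rcases this with h | ⟨_, h⟩
  · simpa using h
  · exact absurd h (lt_irrefl _)

/-- Every ordered-group automorphism of `P₁ = ℚ × ℤ` (lexicographic order)
fixing `(0,1)` has the form `(q,z) ↦ (rq, z)` for some positive rational `r`;
consequently the orbits of the group of such automorphisms are exactly the
sets `{(q,z) : q > 0}`, `{(q,z) : q < 0}` and the singletons `{(0,z)}`. -/
theorem P1_automorphisms_and_orbits :
    (∀ f : ℚ × ℤ → ℚ × ℤ, P1Aut f →
      ∃ r : ℚ, 0 < r ∧ ∀ (q : ℚ) (z : ℤ), f (q, z) = (r * q, z)) ∧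
    (∀ x y : ℚ × ℤ, (∃ f : ℚ × ℤ → ℚ × ℤ, P1Aut f ∧ f x = y) ↔
      (x.2 = y.2 ∧ ((0 < x.1 ∧ 0 < y.1) ∨ (x.1 < 0 ∧ y.1 < 0) ∨ (x.1 = 0 ∧ y.1 = 0)))) := by
  constructor
  · exact aut_form
  · intro x y
    constructor
    · rintro ⟨f, hf, hfx⟩
      obtain ⟨r, hr, hform⟩ := aut_form f hf
      have hx : f (x.1, x.2) = (r * x.1, x.2) := hform x.1 x.2
      rw [show ((x.1, x.2) : ℚ × ℤ) = x from rfl, hfx] at hx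
      have hy1 : y.1 = r * x.1 := by rw [hx]
      have hy2 : y.2 = x.2 := by rw [hx]
      refine ⟨hy2.symm, ?_⟩
      rcases lt_trichotomy x.1 0 with h | h | h
      · exact Or.inr (Or.inl ⟨h, by rw [hy1]; exact mul_neg_of_pos_of_neg hr h⟩)
      · exact Or.inr (Or.inr ⟨h, by rw [hy1, h, mul_zero]⟩)
      · exact Or.inl ⟨h, by rw [hy1]; exact mul_pos hr h⟩
    · rintro ⟨h2, h | h | h⟩
      · refine ⟨fun p => (y.1 / x.1 * p.1, p.2), scale_aut _ (div_pos h.2 h.1), ?_⟩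
        show (y.1 / x.1 * x.1, x.2) = y
        rw [div_mul_cancel₀ _ h.1.ne', h2]
      · refine ⟨fun p => (y.1 / x.1 * p.1, p.2), scale_aut _ (div_pos_of_neg_of_neg h.2 h.1), ?_⟩
        show (y.1 / x.1 * x.1, x.2) = y
        rw [div_mul_cancel₀ _ h.1.ne, h2]
      · refine ⟨fun p => (1 * p.1, p.2), scale_aut 1 one_pos, ?_⟩
        show (1 * x.1, x.2) = y
        rw [one_mul, h.1, ← h.2, h2]
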